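/- arXiv:2403.18345 — 3 statements merged into one kernel-verified Lean document; each statement's English description precedes it below -/
import Mathlib

section
/- Let a, b, c, d ∈ ℂ with ad − bc = 1. In the polynomial ring ℂ[X,Y] there exists a scalar μ ∈ ℂ such that (aX + bY)^6 · (cX + dY)^6 = μ · X^6 Y^6 if and only if (b = 0 and c = 0) or (a = 0 and d = 0). Equivalently, the stabilizer in SL₂(ℂ) of the point of the projective space of degree-12 binary forms corresponding to x₀⁶x₁⁶ consists exactly of the diagonal matrices diag(λ, λ⁻¹) and the antidiagonal matrices [[0, λ], [−λ⁻¹, 0]]. -/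
open MvPolynomial

/-! Evaluating at `(1, 0)` and `(0, 1)` kills `X⁶Y⁶`, so `(ac)⁶ = (bd)⁶ = 0`; in a domain with
`ad - bc = 1` this leaves only the diagonal and antidiagonal matrices. -/

section BinaryForms

variable {R : Type*} [CommRing R] {a b c d μ : R} {n : ℕ}

theorem linearForm_pow_mul_linearForm_pow_of_diagonal (a d : R) (n : ℕ) :
    (C a * X 0 + C 0 * X 1) ^ n * (C 0 * X 0 + C d * X 1) ^ n
      = C (a ^ n * d ^ n) * (X 0 ^ n * X 1 ^ n : MvPolynomial (Fin 2) R) := by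
  simp only [map_zero, zero_mul, add_zero, zero_add, map_mul, map_pow]
  ring

theorem linearForm_pow_mul_linearForm_pow_of_antidiagonal (b c : R) (n : ℕ) :
    (C 0 * X 0 + C b * X 1) ^ n * (C c * X 0 + C 0 * X 1) ^ n
      = C (b ^ n * c ^ n) * (X 0 ^ n * X 1 ^ n : MvPolynomial (Fin 2) R) := by
  simp only [map_zero, zero_mul, add_zero, zero_add, map_mul, map_pow]
  ring

theorem mul_eq_zero_and_mul_eq_zero_of_linearForm_pow_mul_eq [IsReduced R] (hn : n ≠ 0)
    (h : (C a * X 0 + C b * X 1) ^ n * (C c * X 0 + C d * X 1) ^ n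
      = C μ * (X 0 ^ n * X 1 ^ n : MvPolynomial (Fin 2) R)) :
    a * c = 0 ∧ b * d = 0 := by
  have at_e0 := congrArg (eval ![1, 0]) h
  have at_e1 := congrArg (eval ![0, 1]) h
  simp only [map_mul, map_pow, map_add, eval_C, eval_X, Matrix.cons_val_zero,
    Matrix.cons_val_one, Matrix.cons_val_fin_one, mul_one, mul_zero, add_zero, zero_add,
    zero_pow hn, ← mul_pow] at at_e0 at_e1
  exact ⟨IsReduced.eq_zero _ ⟨n, at_e0⟩, IsReduced.eq_zero _ ⟨n, at_e1⟩⟩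

theorem diagonal_or_antidiagonal_of_mul_eq_zero [IsDomain R] (hac : a * c = 0) (hbd : b * d = 0)
    (hdet : a * d - b * c = 1) : (b = 0 ∧ c = 0) ∨ (a = 0 ∧ d = 0) := by
  rcases mul_eq_zero.mp hac with rfl | rfl <;> rcases mul_eq_zero.mp hbd with rfl | rfl
  · simp at hdet
  · exact Or.inr ⟨rfl, rfl⟩
  · exact Or.inl ⟨rfl, rfl⟩
  · simp at hdet

end BinaryForms

/-- For `a, b, c, d ∈ ℂ` with `ad − bc = 1` (i.e. a matrix in `SL₂(ℂ)`),
the substituted binary form `(aX + bY)⁶ (cX + dY)⁶` is a scalar multiple of `X⁶Y⁶`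
if and only if the matrix is diagonal (`b = 0 ∧ c = 0`) or antidiagonal (`a = 0 ∧ d = 0`);
this computes the stabilizer in `SL₂(ℂ)` of the point `p₆,₆ = x₀⁶x₁⁶`. -/
theorem stabilizer_of_x6y6 (a b c d : ℂ) (h : a * d - b * c = 1) :
    (∃ μ : ℂ,
        (C a * X 0 + C b * X 1) ^ 6 * (C c * X 0 + C d * X 1) ^ 6
          = C μ * (X 0 ^ 6 * X 1 ^ 6 : MvPolynomial (Fin 2) ℂ)) ↔
      ((b = 0 ∧ c = 0) ∨ (a = 0 ∧ d = 0)) := by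
  constructor
  · rintro ⟨μ, hμ⟩
    obtain ⟨hac, hbd⟩ := mul_eq_zero_and_mul_eq_zero_of_linearForm_pow_mul_eq (by norm_num) hμ
    exact diagonal_or_antidiagonal_of_mul_eq_zero hac hbd h
  · rintro (⟨rfl, rfl⟩ | ⟨rfl, rfl⟩)
    · exact ⟨_, linearForm_pow_mul_linearForm_pow_of_diagonal a d 6⟩
    · exact ⟨_, linearForm_pow_mul_linearForm_pow_of_antidiagonal b c 6⟩
end

section
/- Let G be the 4×4 integer matrix [[0,3,0,0],[3,0,0,0],[0,0,0,1],[0,0,1,0]] (the Gram matrix of U(3) ⊕ U in the basis (e, f, e′, f′)) and let Θ be the 4×4 integer matrix [[−2,0,−1,0],[0,1,0,−1],[3,0,1,0],[0,3,0,−2]] (the matrix of the map θ₁ with θ₁(e) = −2e + 3e′, θ₁(f) = f + 3f′, θ₁(e′) = −e + e′, θ₁(f′) = −f − 2f′). Then: (i) Θᵀ G Θ = G, so θ₁ is an isometry of U(3) ⊕ U; (ii) Θ² + Θ + I = 0, hence Θ³ = I, so θ₁ has order 3; (iii) Θ has no nonzero fixed vectors: Θx = x implies x = 0 for x ∈ ℚ⁴;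 (iv) (Θ − I)·G⁻¹ has integer entries, so θ₁ acts trivially on the discriminant group (U(3) ⊕ U)*/(U(3) ⊕ U). -/
namespace ThetaOneIsometry

/-- The Gram matrix of `U(3) ⊕ U` in the basis `(e, f, e′, f′)`. -/
def G : Matrix (Fin 4) (Fin 4) ℤ :=
  !![0, 3, 0, 0;
     3, 0, 0, 0;
     0, 0, 0, 1;
     0, 0, 1, 0]

/-- The matrix of the map `θ₁` with `θ₁(e) = −2e + 3e′`, `θ₁(f) = f + 3f′`,
`θ₁(e′) = −e + e′`, `θ₁(f′) = −f − 2f′` in the basis `(e, f, e′, f′)`. -/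
def Θ : Matrix (Fin 4) (Fin 4) ℤ :=
  !![-2, 0, -1,  0;
      0, 1,  0, -1;
      3, 0,  1,  0;
      0, 3,  0, -2]


end ThetaOneIsometry

/-!
Apart from finitely many integer matrix identities, two observations carry the proof.
On a vector `x` fixed by `Θ`, the relation `Θ² + Θ + 1 = 0` reads `3x = 0`, so `x = 0` over `ℚ`.
And `Θ − 1 = M G` with `M` integral, so `(Θ − 1) G⁻¹ = M`.
-/

theorem pow_three_eq_one_of_sq_add_self_add_one_eq_zero {R : Type*} [Ring R] {a : R}
    (h : a ^ 2 + a + 1 = 0) : a ^ 3 = 1 := by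
  have : a ^ 3 - 1 = (a - 1) * (a ^ 2 + a + 1) := by noncomm_ring
  rwa [h, mul_zero, sub_eq_zero] at this

namespace Matrix

variable {n : Type*} [Fintype n] [DecidableEq n]

theorem eq_zero_of_mulVec_eq_self {R : Type*} [CommRing R] [IsAddTorsionFree R]
    {A : Matrix n n R} (hA : A ^ 2 + A + 1 = 0) {x : n → R} (hx : A *ᵥ x = x) : x = 0 := by
  have h3 : (3 : ℕ) • x = 0 :=
    calc (3 : ℕ) • x = (A ^ 2 + A + 1) *ᵥ x := by
          rw [add_mulVec, add_mulVec, sq, ← mulVec_mulVec, hx, hx, one_mulVec]; module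
      _ = 0 := by rw [hA, zero_mulVec]
  exact (smul_eq_zero.mp h3).resolve_left three_ne_zero

theorem mapMatrix_mul_inv_eq_of_eq_mul {R K : Type*} [CommRing R] [Field K] (f : R →+* K)
    {A M B : Matrix n n R} (h : A = M * B) (hB : f B.det ≠ 0) :
    f.mapMatrix A * (f.mapMatrix B)⁻¹ = f.mapMatrix M := by
  rw [f.map_det] at hB
  rw [h, map_mul, mul_nonsing_inv_cancel_right _ _ (isUnit_iff_ne_zero.mpr hB)]

end Matrix

namespace ThetaOneIsometry

theorem transpose_Θ_mul_G_mul_Θ : Θ.transpose * G * Θ = G := by decide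

theorem Θ_sq_add_Θ_add_one : Θ ^ 2 + Θ + 1 = 0 := by decide

theorem Θ_pow_three : Θ ^ 3 = 1 :=
  pow_three_eq_one_of_sq_add_self_add_one_eq_zero Θ_sq_add_Θ_add_one

theorem orderOf_Θ : orderOf Θ = 3 := orderOf_eq_prime Θ_pow_three (by decide)

theorem det_G : G.det = 9 := by
  simp [G, Matrix.det_succ_row_zero, Fin.sum_univ_succ, Fin.succAbove]

theorem Θ_sub_one_eq_mul_G :
    Θ - 1 = !![0, -1, 0, -1; 0, 0, -1, 0; 0, 1, 0, 0; 1, 0, -3, 0] * G := by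
  decide

/-- (i) `Θᵀ G Θ = G`, so `θ₁` is an isometry of `U(3) ⊕ U`;
(ii) `Θ² + Θ + I = 0`, hence `Θ³ = I` and `θ₁` has order `3`;
(iii) `Θ` has no nonzero fixed vectors over `ℚ`;
(iv) `(Θ − I)·G⁻¹` has integer entries, so `θ₁` acts trivially on the discriminant group
`(U(3) ⊕ U)*/(U(3) ⊕ U)`. -/
theorem theta_one_isometry :
    (Θ.transpose * G * Θ = G) ∧
    (Θ ^ 2 + Θ + 1 = 0) ∧ (Θ ^ 3 = 1) ∧ (orderOf Θ = 3) ∧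
    (∀ x : Fin 4 → ℚ, (Θ.map ((↑) : ℤ → ℚ)).mulVec x = x → x = 0) ∧
    (∀ i j : Fin 4, ∃ n : ℤ,
      ((Θ.map ((↑) : ℤ → ℚ) - 1) * (G.map ((↑) : ℤ → ℚ))⁻¹) i j = (n : ℚ)) := by
  refine ⟨transpose_Θ_mul_G_mul_Θ, Θ_sq_add_Θ_add_one, Θ_pow_three, orderOf_Θ,
    fun x => Matrix.eq_zero_of_mulVec_eq_self ?_, fun i j => ?_⟩
  · have h := congrArg (Int.castRingHom ℚ).mapMatrix Θ_sq_add_Θ_add_one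
    rwa [map_add, map_add, map_pow, map_one, map_zero] at h
  · have h := Matrix.mapMatrix_mul_inv_eq_of_eq_mul (Int.castRingHom ℚ) Θ_sub_one_eq_mul_G
      (by simp [det_G])
    rw [map_sub, map_one] at h
    exact ⟨_, congrFun (congrFun h i) j⟩

end ThetaOneIsometry
end

section
/- Set c₆ = −6·(2π)⁶/(3⁶·6!) and z = 26·(2π)⁶/(3⁷·6!) (real numbers). For real numbers m₀₀, m₄₃, m₂₃, the two equations −(4π²/3)·m₀₀ + (4π²/9)·m₂₃ = 0 and 3·(2⁵ + 1)·c₆·m₀₀ + 3·z·m₄₃ + 6·c₆·m₂₃ = 0 hold simultaneously if and only if m₂₃ = 3·m₀₀ and m₄₃ = 27·m₀₀. Moreover, under these conditions, ((3¹⁰ − 3)/(2·11·61))·m₀₀ + (3/(11·61))·m₄₃ + (3·(2⁹ + 1)/(11·61))·m₂₃ = 51·m₀₀. -/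
/-! Both obstruction equations are nonzero multiples of linear forms in `m₂₃ − 3·m₀₀` and
`m₄₃ − 27·m₀₀`: the first is `(4π²/9)·(m₂₃ − 3·m₀₀)`, and since `c₆` and `z` are the rational
multiples `−6` and `26/3` of `κ = (2π)⁶/(3⁶·6!)`, the second is `κ·(26·(m₄₃ − 27·m₀₀) − 36·(m₂₃ − 3·m₀₀))`.
The system is therefore triangular in these two forms. -/

open Real

namespace ObstructionEquations

/-- The Fourier coefficient `c₆ = −6·(2π)⁶/(3⁶·6!)`. -/
noncomputable def c₆ : ℝ := -6 * (2 * π) ^ 6 / (3 ^ 6 * 720)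

/-- The value `z = ζ¹(6) + ζ⁻¹(6) = 26·(2π)⁶/(3⁷·6!)`. -/
noncomputable def z : ℝ := 26 * (2 * π) ^ 6 / (3 ^ 7 * 720)

lemma first_obstruction_eq (m00 m23 : ℝ) :
    -(4 * π ^ 2 / 3) * m00 + (4 * π ^ 2 / 9) * m23 = 4 * π ^ 2 / 9 * (m23 - 3 * m00) := by
  ring

lemma second_obstruction_eq (m00 m43 m23 : ℝ) :
    3 * (2 ^ 5 + 1) * c₆ * m00 + 3 * z * m43 + 6 * c₆ * m23 =
      (2 * π) ^ 6 / (3 ^ 6 * 720) * (26 * (m43 - 27 * m00) - 36 * (m23 - 3 * m00)) := by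
  unfold c₆ z
  ring

/-- For real numbers `m₀₀, m₄₃, m₂₃`, the two obstruction equations
`−(4π²/3)·m₀₀ + (4π²/9)·m₂₃ = 0` and `3·(2⁵+1)·c₆·m₀₀ + 3·z·m₄₃ + 6·c₆·m₂₃ = 0` hold
simultaneously if and only if `m₂₃ = 3·m₀₀` and `m₄₃ = 27·m₀₀`; moreover, under these
conditions the weight `((3¹⁰−3)/(2·11·61))·m₀₀ + (3/(11·61))·m₄₃ + (3·(2⁹+1)/(11·61))·m₂₃`
equals `51·m₀₀`. -/
theorem obstruction_solution (m00 m43 m23 : ℝ) :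
    ((-(4 * π ^ 2 / 3) * m00 + (4 * π ^ 2 / 9) * m23 = 0 ∧
        3 * (2 ^ 5 + 1) * c₆ * m00 + 3 * z * m43 + 6 * c₆ * m23 = 0) ↔
      (m23 = 3 * m00 ∧ m43 = 27 * m00)) ∧
    ((m23 = 3 * m00 ∧ m43 = 27 * m00) →
      ((3 ^ 10 - 3) / (2 * 11 * 61)) * m00 + (3 / (11 * 61)) * m43 +
          (3 * (2 ^ 9 + 1) / (11 * 61)) * m23 = 51 * m00) := by
  have hfirst : (4 * π ^ 2 / 9 : ℝ) ≠ 0 := by positivity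
  have hsecond : (2 * π) ^ 6 / (3 ^ 6 * 720 : ℝ) ≠ 0 := by positivity
  rw [first_obstruction_eq, second_obstruction_eq, mul_eq_zero_iff_left hfirst,
    mul_eq_zero_iff_left hsecond]
  refine ⟨⟨fun ⟨h23, h43⟩ => ⟨by linarith, by linarith⟩,
    fun ⟨h23, h43⟩ => ⟨by linarith, by linarith⟩⟩, fun ⟨h23, h43⟩ => ?_⟩
  rw [h23, h43]
  ring

end ObstructionEquations
end
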